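/- Suppose the two-register Minsky machine has a halt transition from state q, so that Π contains the formulas q ⊗ ¬h, h ⊗ !^a r_a ⊗ ¬h, h ⊗ !^b r_b ⊗ ¬h, and h ⊗ !^∞ 1. Then for every configuration c = ⟨q, v⟩ (with arbitrary register values), the MSEL_Σ2 sequent ⊢ ?^∞Π, ⟨c⟩ is derivable. -/
import Mathlib


namespace Msel

/-- Subexponential labels of the signature `Σ₂ = ⟨{∞, a, b}, {∞}, ≤⟩`. -/
inductive Lbl : Type
  | inf  -- the unbounded label ∞
  | la   -- the bounded label a
  | lb   -- the bounded label b
deriving DecidableEq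

/-- The pre-order on labels: the reflexive-transitive closure of `a ≤ ∞` and `b ≤ ∞`. -/
def Lbl.le (u v : Lbl) : Prop := u = v ∨ v = Lbl.inf

/-- A label is unbounded iff it is ∞. -/
def Lbl.unb (u : Lbl) : Prop := u = Lbl.inf

/-- Formulas of multiplicative subexponential logic MSEL_Σ₂.
Atoms are named by natural numbers. -/
inductive Fm : Type
  | atom (p : ℕ)            -- atom p
  | natom (p : ℕ)           -- negated atom ¬p
  | tens (A B : Fm)         -- A ⊗ B
  | one                     -- 1
  | par (A B : Fm)          -- A ⅋ B
  | bot                     -- ⊥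
  | bang (u : Lbl) (A : Fm) -- !^u A
  | qm (u : Lbl) (A : Fm)   -- ?^u A
deriving DecidableEq

/-- The (unfocused) one-sided sequent calculus for MSEL_Σ₂; `Der Γ` means `⊢ Γ` is derivable. -/
inductive Der : Multiset Fm → Prop
  | init (p : ℕ) : Der {Fm.atom p, Fm.natom p}
  | tens {Γ Δ : Multiset Fm} {A B : Fm} :
      Der (A ::ₘ Γ) → Der (B ::ₘ Δ) → Der (Fm.tens A B ::ₘ (Γ + Δ))
  | one : Der {Fm.one}
  | par {Γ : Multiset Fm} {A B : Fm} :
      Der (A ::ₘ B ::ₘ Γ) → Der (Fm.par A B ::ₘ Γ)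
  | bot {Γ : Multiset Fm} : Der Γ → Der (Fm.bot ::ₘ Γ)
  | qm {Γ : Multiset Fm} {A : Fm} {u : Lbl} :
      Der (A ::ₘ Γ) → Der (Fm.qm u A ::ₘ Γ)
  | bang {Γ : Multiset Fm} {C : Fm} {u : Lbl} :
      (∀ F ∈ Γ, ∃ v B, F = Fm.qm v B ∧ Lbl.le u v) →
      Der (C ::ₘ Γ) → Der (Fm.bang u C ::ₘ Γ)
  | weak {Γ : Multiset Fm} {A : Fm} :
      Der Γ → Der (Fm.qm Lbl.inf A ::ₘ Γ)
  | contr {Γ : Multiset Fm} {A : Fm} :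
      Der (Fm.qm Lbl.inf A ::ₘ Fm.qm Lbl.inf A ::ₘ Γ) →
      Der (Fm.qm Lbl.inf A ::ₘ Γ)

/-- Positive formulas: atoms, ⊗, 1, !. -/
def Fm.isPos : Fm → Prop
  | .atom _ => True
  | .tens _ _ => True
  | .one => True
  | .bang _ _ => True
  | _ => False

/-- Negative formulas: negated atoms, ⅋, ⊥, ?. -/
def Fm.isNeg : Fm → Prop
  | .natom _ => True
  | .par _ _ => True
  | .bot => True
  | .qm _ _ => True
  | _ => False

/-- Neutral formulas: positive formulas, atoms, negated atoms and ?-formulas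
(i.e. everything except ⅋ and ⊥). -/
def Fm.isNeutral : Fm → Prop
  | .par _ _ => False
  | .bot => False
  | _ => True

/-- The focused sequent calculus for MSEL_Σ₂.
`FDer Γ none` is the unfocused sequent `⊢ Γ`;
`FDer Ω (some A)` is the focused sequent `⊢ Ω, [A]`. -/
inductive FDer : Multiset Fm → Option Fm → Prop
  | finit {Θ : Multiset Fm} (p : ℕ) :
      (∀ F ∈ Θ, ∃ B, F = Fm.qm Lbl.inf B) →
      FDer (Fm.natom p ::ₘ Θ) (some (Fm.atom p))
  | ftens {Θ Ω₁ Ω₂ : Multiset Fm} {B C : Fm} :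
      (∀ F ∈ Θ, ∃ A, F = Fm.qm Lbl.inf A) →
      (∀ F ∈ Ω₁, F.isNeutral) → (∀ F ∈ Ω₂, F.isNeutral) →
      FDer (Θ + Ω₁) (some B) → FDer (Θ + Ω₂) (some C) →
      FDer (Θ + Ω₁ + Ω₂) (some (Fm.tens B C))
  | fone {Θ : Multiset Fm} :
      (∀ F ∈ Θ, ∃ B, F = Fm.qm Lbl.inf B) → FDer Θ (some Fm.one)
  | fbang {Γ Δ : Multiset Fm} {u : Lbl} {C : Fm} :
      (∀ F ∈ Γ, ∃ v B, F = Fm.qm v B ∧ Lbl.le u v) →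
      (∀ F ∈ Δ, ∃ B, F = Fm.qm Lbl.inf B) →
      FDer (C ::ₘ Γ) none → FDer (Γ + Δ) (some (Fm.bang u C))
  | blur {Ω : Multiset Fm} {N : Fm} :
      N.isNeg → (∀ F ∈ Ω, F.isNeutral) →
      FDer (N ::ₘ Ω) none → FDer Ω (some N)
  | par {Γ : Multiset Fm} {A B : Fm} :
      FDer (A ::ₘ B ::ₘ Γ) none → FDer (Fm.par A B ::ₘ Γ) none
  | bot {Γ : Multiset Fm} : FDer Γ none → FDer (Fm.bot ::ₘ Γ) none
  | decide {Ω : Multiset Fm} {P : Fm} :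
      P.isPos → (∀ F ∈ Ω, F.isNeutral) →
      FDer Ω (some P) → FDer (P ::ₘ Ω) none
  | ldecide {Ω : Multiset Fm} {u : Lbl} {A : Fm} :
      u ≠ Lbl.inf → (∀ F ∈ Ω, F.isNeutral) →
      FDer Ω (some A) → FDer (Fm.qm u A ::ₘ Ω) none
  | udecide {Ω : Multiset Fm} {A : Fm} :
      (∀ F ∈ Ω, F.isNeutral) →
      FDer (Fm.qm Lbl.inf A ::ₘ Ω) (some A) →
      FDer (Fm.qm Lbl.inf A ::ₘ Ω) none

/-! ## Two-register Minsky machines -/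

/-- The instruction set of a two-register Minsky machine. -/
inductive Instr : Type
  | halt | incra | incrb | decra | decrb | isza | iszb
deriving DecidableEq

/-- A configuration `⟨q, v⟩`: a state (states are names by natural numbers,
with `0` the distinguished halting state `*`) together with the values
`v(a)` and `v(b)` of the two registers. -/
structure Cfg : Type where
  q : ℕ
  a : ℕ
  b : ℕ
deriving DecidableEq

/-- A two-register Minsky machine is presented by its finite labelled transition
table: a finite list of (source state, instruction, target state) triples. -/
abbrev Prog : Type := List (ℕ × Instr × ℕ)

/-- The labelled transition relation between configurations generated by the
table `P`, following the seven schemas (the halting state is `0`). -/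
inductive Step (P : Prog) : Cfg → Instr → Cfg → Prop
  | halt {q m n : ℕ} : (q, Instr.halt, 0) ∈ P → q ≠ 0 →
      Step P ⟨q, m, n⟩ Instr.halt ⟨0, 0, 0⟩
  | incra {q r m n : ℕ} : (q, Instr.incra, r) ∈ P → q ≠ r →
      Step P ⟨q, m, n⟩ Instr.incra ⟨r, m + 1, n⟩
  | incrb {q r m n : ℕ} : (q, Instr.incrb, r) ∈ P → q ≠ r →
      Step P ⟨q, m, n⟩ Instr.incrb ⟨r, m, n + 1⟩
  | decra {q r m n : ℕ} : (q, Instr.decra, r) ∈ P → q ≠ r →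
      Step P ⟨q, m + 1, n⟩ Instr.decra ⟨r, m, n⟩
  | decrb {q r m n : ℕ} : (q, Instr.decrb, r) ∈ P → q ≠ r →
      Step P ⟨q, m, n + 1⟩ Instr.decrb ⟨r, m, n⟩
  | isza {q r n : ℕ} : (q, Instr.isza, r) ∈ P → q ≠ r →
      Step P ⟨q, 0, n⟩ Instr.isza ⟨r, 0, n⟩
  | iszb {q r m : ℕ} : (q, Instr.iszb, r) ∈ P → q ≠ r →
      Step P ⟨q, m, 0⟩ Instr.iszb ⟨r, m, 0⟩

/-- The transition relation is deterministic. -/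
def Deterministic (P : Prog) : Prop :=
  ∀ {c : Cfg} {i₁ i₂ : Instr} {d₁ d₂ : Cfg},
    Step P c i₁ d₁ → Step P c i₂ d₂ → i₁ = i₂ ∧ d₁ = d₂

/-- Every entry of the table generates transitions fitting one of the seven
schemas: halt entries target the halting state `0` and have non-halting source,
and the other entries have distinct source and target states. -/
def WellFormed (P : Prog) : Prop :=
  ∀ e ∈ P, (e.2.1 = Instr.halt → e.2.2 = 0 ∧ e.1 ≠ 0) ∧
           (e.2.1 ≠ Instr.halt → e.1 ≠ e.2.2)

/-- The machine halts from `c₀` if some finite sequence of transitions leads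
from `c₀` to the halting configuration `⟨*, {a:0, b:0}⟩`. -/
def Halts (P : Prog) (c₀ : Cfg) : Prop :=
  Relation.ReflTransGen (fun c d => ∃ i, Step P c i d) c₀ ⟨0, 0, 0⟩

/-! ## The encoding -/

/-- The atom `r_a`. -/
def raA : Fm := Fm.atom 0
/-- The atom `r_b`. -/
def rbA : Fm := Fm.atom 1
/-- The atom `h`. -/
def hA : Fm := Fm.atom 2
/-- The negated atom `¬r_a`. -/
def nRa : Fm := Fm.natom 0
/-- The negated atom `¬r_b`. -/
def nRb : Fm := Fm.natom 1
/-- The negated atom `¬h`. -/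
def nH : Fm := Fm.natom 2
/-- The atom for state `q` (distinct from `r_a`, `r_b`, `h`). -/
def stA (q : ℕ) : Fm := Fm.atom (q + 3)
/-- The negated atom `¬q` for state `q`. -/
def nSt (q : ℕ) : Fm := Fm.natom (q + 3)
/-- The formula `?^a ¬r_a`. -/
def qa : Fm := Fm.qm Lbl.la nRa
/-- The formula `?^b ¬r_b`. -/
def qb : Fm := Fm.qm Lbl.lb nRb

/-- The formulas encoding one entry of the transition table. -/
def encInstr : ℕ × Instr × ℕ → Multiset Fm
  | (q, Instr.halt, _) =>
      {Fm.tens (stA q) nH,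
       Fm.tens (Fm.tens hA (Fm.bang Lbl.la raA)) nH,
       Fm.tens (Fm.tens hA (Fm.bang Lbl.lb rbA)) nH,
       Fm.tens hA (Fm.bang Lbl.inf Fm.one)}
  | (q, Instr.incra, r) => {Fm.tens (stA q) (Fm.par (nSt r) qa)}
  | (q, Instr.incrb, r) => {Fm.tens (stA q) (Fm.par (nSt r) qb)}
  | (q, Instr.decra, r) => {Fm.tens (Fm.tens (stA q) (Fm.bang Lbl.la raA)) (nSt r)}
  | (q, Instr.decrb, r) => {Fm.tens (Fm.tens (stA q) (Fm.bang Lbl.lb rbA)) (nSt r)}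
  | (q, Instr.isza, r) => {Fm.tens (stA q) (Fm.bang Lbl.lb (nSt r))}
  | (q, Instr.iszb, r) => {Fm.tens (stA q) (Fm.bang Lbl.la (nSt r))}

/-- The context `Π` encoding the transition relation of the machine `P`. -/
def PiCtx (P : Prog) : Multiset Fm := (P.map encInstr).sum

/-- `?^∞ Γ`: each element of `Γ` prefixed by `?^∞`. -/
def qmInf (Γ : Multiset Fm) : Multiset Fm := Γ.map (Fm.qm Lbl.inf)

/-- The encoding `⟨c⟩` of a configuration: `v(a)` copies of `?^a ¬r_a`,
`v(b)` copies of `?^b ¬r_b`, and `¬q`. -/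
def encCfg (c : Cfg) : Multiset Fm :=
  Multiset.replicate c.a qa + Multiset.replicate c.b qb + {nSt c.q}

/-- The sequent `⊢ ?^∞Π, ⟨c⟩` encoding the halting problem from `c`. -/
def encSeq (P : Prog) (c : Cfg) : Multiset Fm := qmInf (PiCtx P) + encCfg c

/-! ## Concrete Gödel encodings -/

/-- Gödel code of a label. -/
def Lbl.code : Lbl → ℕ
  | .inf => 0 | .la => 1 | .lb => 2

/-- A concrete (effective) Gödel encoding of formulas. -/
def Fm.code : Fm → ℕ
  | .atom p => Nat.pair 0 p
  | .natom p => Nat.pair 1 p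
  | .tens A B => Nat.pair 2 (Nat.pair A.code B.code)
  | .one => Nat.pair 3 0
  | .par A B => Nat.pair 4 (Nat.pair A.code B.code)
  | .bot => Nat.pair 5 0
  | .bang u A => Nat.pair 6 (Nat.pair u.code A.code)
  | .qm u A => Nat.pair 7 (Nat.pair u.code A.code)

/-- Gödel code of a list of natural numbers. -/
def codeList : List ℕ → ℕ
  | [] => 0
  | x :: l => Nat.pair x (codeList l) + 1

/-- A concrete (effective) Gödel encoding of finite multisets of formulas
(a sequent is coded by the sorted list of the codes of its elements). -/
def codeSeq (Γ : Multiset Fm) : ℕ :=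
  codeList ((Γ.map Fm.code).sort (· ≤ ·))

/-- Gödel code of an instruction. -/
def Instr.code : Instr → ℕ
  | .halt => 0 | .incra => 1 | .incrb => 2 | .decra => 3
  | .decrb => 4 | .isza => 5 | .iszb => 6

/-- A concrete (effective) Gödel encoding of machines. -/
def codeProg (P : Prog) : ℕ :=
  codeList (P.map fun e => Nat.pair e.1 (Nat.pair e.2.1.code e.2.2))

/-- A concrete (effective) Gödel encoding of configurations. -/
def codeCfg (c : Cfg) : ℕ := Nat.pair c.q (Nat.pair c.a c.b)


lemma der_eq {Γ Δ : Multiset Fm} (h : Γ = Δ) (d : Der Γ) : Der Δ := h ▸ d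

lemma mem_PiCtx {F : Fm} {e : ℕ × Instr × ℕ} {P : Prog} (he : e ∈ P)
    (hF : F ∈ encInstr e) : F ∈ PiCtx P := by
  induction P with
  | nil => cases he
  | cons a l ih =>
    rcases List.mem_cons.mp he with rfl | he'
    · simp only [PiCtx, List.map_cons, List.sum_cons, Multiset.mem_add]
      exact Or.inl hF
    · simp only [PiCtx, List.map_cons, List.sum_cons, Multiset.mem_add]
      exact Or.inr (ih he')

lemma qmInf_mem {Γ : Multiset Fm} {F : Fm} (h : F ∈ qmInf Γ) :
    ∃ B, F = Fm.qm Lbl.inf B := by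
  rcases Multiset.mem_map.mp h with ⟨B, _, rfl⟩; exact ⟨B, rfl⟩

lemma weaken_many {Δ Γ : Multiset Fm} (h : ∀ F ∈ Δ, ∃ B, F = Fm.qm Lbl.inf B)
    (d : Der Γ) : Der (Δ + Γ) := by
  induction Δ using Multiset.induction with
  | empty => simpa
  | cons a s ih =>
    obtain ⟨B, rfl⟩ := h a (Multiset.mem_cons_self a s)
    rw [Multiset.cons_add]
    exact Der.weak (ih fun F hF => h F (Multiset.mem_cons_of_mem hF))

lemma contract_derelict {Γ : Multiset Fm} {A : Fm} (h : Fm.qm Lbl.inf A ∈ Γ)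
    (d : Der (A ::ₘ Γ)) : Der Γ := by
  have h2 : Der (Fm.qm Lbl.inf A ::ₘ Γ) := Der.qm d
  rw [← Multiset.cons_erase h] at h2 ⊢
  exact Der.contr h2

lemma init_swap (p : ℕ) : Der {Fm.natom p, Fm.atom p} := by
  have := Der.init p; rwa [Multiset.pair_comm] at this

/-- Key lemma: `⊢ ?^∞Π, ?^a¬r_a, …, ?^b¬r_b, …, ¬h` is derivable when the
machine has a halt transition. -/
lemma nH_sequent {M : Prog} {q : ℕ} (htr : (q, Instr.halt, 0) ∈ M) (m n : ℕ) :
    Der (nH ::ₘ (qmInf (PiCtx M) + Multiset.replicate m qa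
        + Multiset.replicate n qb)) := by
  set Q := qmInf (PiCtx M) with hQ
  have hQmem : ∀ F ∈ Q, ∃ B, F = Fm.qm Lbl.inf B := fun F hF => qmInf_mem hF
  have hbangcond : ∀ u, ∀ F ∈ Q, ∃ v B, F = Fm.qm v B ∧ Lbl.le u v := by
    intro u F hF
    obtain ⟨B, rfl⟩ := hQmem F hF
    exact ⟨Lbl.inf, B, rfl, Or.inr rfl⟩
  have hmemPi : ∀ F ∈ encInstr (q, Instr.halt, 0), Fm.qm Lbl.inf F ∈ Q := by
    intro F hF
    exact Multiset.mem_map_of_mem _ (mem_PiCtx htr hF)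
  induction m with
  | zero =>
    induction n with
    | zero =>
      simp only [Multiset.replicate_zero, add_zero]
      -- use h ⊗ !^∞ 1
      apply contract_derelict (A := Fm.tens hA (Fm.bang Lbl.inf Fm.one))
      · exact Multiset.mem_cons_of_mem (hmemPi _ (by simp [encInstr]))
      · have left : Der (hA ::ₘ ({nH} : Multiset Fm)) := Der.init 2
        have inner : Der (Fm.one ::ₘ Q) := by
          have := weaken_many hQmem Der.one
          exact der_eq (by rw [add_comm, Multiset.singleton_add]) this
        have right : Der (Fm.bang Lbl.inf Fm.one ::ₘ Q) :=
          Der.bang (hbangcond _) inner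
        have := Der.tens left right
        exact der_eq (by rw [Multiset.singleton_add]) this
    | succ n ihn =>
      -- use h ⊗ !^b r_b ⊗ ¬h
      apply contract_derelict
        (A := Fm.tens (Fm.tens hA (Fm.bang Lbl.lb rbA)) nH)
      · exact Multiset.mem_cons_of_mem (Multiset.mem_add.mpr (Or.inl
          (Multiset.mem_add.mpr (Or.inl (hmemPi _ (by simp [encInstr]))))))
      · have innerb : Der (rbA ::ₘ ({qb} : Multiset Fm)) := by
          have : Der (nRb ::ₘ ({rbA} : Multiset Fm)) := init_swap 1
          have h2 : Der (qb ::ₘ ({rbA} : Multiset Fm)) := Der.qm this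
          exact der_eq (Multiset.cons_swap _ _ _) h2
        have bangb : Der (Fm.bang Lbl.lb rbA ::ₘ ({qb} : Multiset Fm)) := by
          refine Der.bang ?_ innerb
          intro F hF
          rw [Multiset.mem_singleton] at hF
          exact ⟨Lbl.lb, nRb, hF, Or.inl rfl⟩
        have lt : Der (Fm.tens hA (Fm.bang Lbl.lb rbA) ::ₘ
            ({nH} + {qb} : Multiset Fm)) :=
          Der.tens (Der.init 2) bangb
        have := Der.tens lt ihn
        refine der_eq ?_ this
        simp [Multiset.replicate_succ, Multiset.singleton_add,
          Multiset.cons_add, Multiset.add_cons, add_assoc]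
  | succ m ihm =>
    -- use h ⊗ !^a r_a ⊗ ¬h
    apply contract_derelict
      (A := Fm.tens (Fm.tens hA (Fm.bang Lbl.la raA)) nH)
    · exact Multiset.mem_cons_of_mem (Multiset.mem_add.mpr (Or.inl
        (Multiset.mem_add.mpr (Or.inl (hmemPi _ (by simp [encInstr]))))))
    · have innera : Der (raA ::ₘ ({qa} : Multiset Fm)) := by
        have : Der (nRa ::ₘ ({raA} : Multiset Fm)) := init_swap 0
        have h2 : Der (qa ::ₘ ({raA} : Multiset Fm)) := Der.qm this
        exact der_eq (Multiset.cons_swap _ _ _) h2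
      have banga : Der (Fm.bang Lbl.la raA ::ₘ ({qa} : Multiset Fm)) := by
        refine Der.bang ?_ innera
        intro F hF
        rw [Multiset.mem_singleton] at hF
        exact ⟨Lbl.la, nRa, hF, Or.inl rfl⟩
      have lt : Der (Fm.tens hA (Fm.bang Lbl.la raA) ::ₘ
          ({nH} + {qa} : Multiset Fm)) :=
        Der.tens (Der.init 2) banga
      have := Der.tens lt ihm
      refine der_eq ?_ this
      simp [Multiset.replicate_succ, Multiset.singleton_add,
        Multiset.cons_add, Multiset.add_cons, add_assoc]

/-- Suppose the machine has a `halt` transition from state `q`,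
so `Π` contains `q ⊗ ¬h`, `h ⊗ !^a r_a ⊗ ¬h`, `h ⊗ !^b r_b ⊗ ¬h` and
`h ⊗ !^∞ 1`.  Then for every configuration `c = ⟨q, v⟩` (with arbitrary
register values) the sequent `⊢ ?^∞Π, ⟨c⟩` is derivable. -/
theorem halt_sequent_derivable (M : Prog) (hdet : Deterministic M) {q : ℕ}
    (htr : (q, Instr.halt, 0) ∈ M) (hq : q ≠ 0) (m n : ℕ) :
    Der (encSeq M ⟨q, m, n⟩) := by
  have hmemPi : Fm.qm Lbl.inf (Fm.tens (stA q) nH) ∈ qmInf (PiCtx M) :=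
    Multiset.mem_map_of_mem _ (mem_PiCtx htr (by simp [encInstr]))
  apply contract_derelict (A := Fm.tens (stA q) nH)
  · simp only [encSeq, Multiset.mem_add]
    exact Or.inl hmemPi
  · have left : Der (stA q ::ₘ ({nSt q} : Multiset Fm)) := Der.init (q + 3)
    have := Der.tens left (nH_sequent htr m n)
    refine der_eq ?_ this
    simp only [encSeq, encCfg, Multiset.singleton_add, Multiset.cons_add, add_assoc]
    rw [add_comm (Multiset.replicate n qb) ({nSt q} : Multiset Fm),
      Multiset.singleton_add, Multiset.add_cons, Multiset.add_cons]

end Msel
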